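/- arXiv:2406.09101 — 2 statements merged into one kernel-verified Lean document; each statement's English description precedes it below -/
import Mathlib

section
/- Let X and Y be real Banach spaces, let r : X → Y be a continuously differentiable (C¹) map, and let H : X → ℝ be a C¹ functional. Suppose that for each x with r(x) = 0 the Fréchet derivative D_x r : X → Y is a surjective continuous linear map. If x₀ satisfies r(x₀) = 0 and D_{x₀}H[v] = 0 for every v in the kernel of D_{x₀}r, then there exists a continuous linear functional λ : Y → ℝ such that D_{x₀}H[v] = λ(D_{x₀}r[v]) for all v ∈ X. -/
/-! Since `D_{x₀}H` vanishes on the kernel of the surjection `D_{x₀}r`, it factors linearly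
through it. The factor is continuous because, by the open mapping theorem, a surjective
operator between Banach spaces is a quotient map. -/

theorem LinearMap.exists_comp_eq_of_ker_le {R M M₂ M₃ : Type*} [Ring R]
    [AddCommGroup M] [Module R M] [AddCommGroup M₂] [Module R M₂] [AddCommGroup M₃] [Module R M₃]
    {f : M →ₗ[R] M₂} (hf : Function.Surjective f) {g : M →ₗ[R] M₃} (h : ker f ≤ ker g) :
    ∃ l : M₂ →ₗ[R] M₃, l ∘ₗ f = g := by
  refine ⟨(ker f).liftQ g h ∘ₗ (f.quotKerEquivOfSurjective hf).symm.toLinearMap, ?_⟩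
  ext x
  have hx : (f.quotKerEquivOfSurjective hf).symm (f x) = (ker f).mkQ x :=
    (LinearEquiv.symm_apply_eq _).2 rfl
  simp [hx]

theorem ContinuousLinearMap.exists_comp_eq_of_ker_le {𝕜 E F G : Type*}
    [NontriviallyNormedField 𝕜] [NormedAddCommGroup E] [NormedSpace 𝕜 E] [CompleteSpace E]
    [NormedAddCommGroup F] [NormedSpace 𝕜 F] [CompleteSpace F]
    [AddCommGroup G] [Module 𝕜 G] [TopologicalSpace G]
    {D : E →L[𝕜] F} (hD : Function.Surjective D) {φ : E →L[𝕜] G} (h : D.ker ≤ φ.ker) :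
    ∃ Λ : F →L[𝕜] G, Λ.comp D = φ := by
  obtain ⟨l, hl⟩ := LinearMap.exists_comp_eq_of_ker_le hD h
  have hl' : ⇑l ∘ ⇑D = ⇑φ := congrArg DFunLike.coe hl
  have hcont : Continuous l := by
    rw [(D.isQuotientMap hD).continuous_iff, hl']
    exact φ.continuous
  exact ⟨⟨l, hcont⟩, ContinuousLinearMap.coe_injective hl⟩

theorem lagrange_multipliers_banach_general
    {X Y : Type*} [NormedAddCommGroup X] [NormedSpace ℝ X] [CompleteSpace X]
    [NormedAddCommGroup Y] [NormedSpace ℝ Y] [CompleteSpace Y]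
    (r : X → Y) (H : X → ℝ)
    (hsurj : ∀ x : X, r x = 0 → Function.Surjective (fderiv ℝ r x))
    (x₀ : X) (hx₀ : r x₀ = 0)
    (hker : ∀ v : X, fderiv ℝ r x₀ v = 0 → fderiv ℝ H x₀ v = 0) :
    ∃ Λ : Y →L[ℝ] ℝ, ∀ v : X, fderiv ℝ H x₀ v = Λ (fderiv ℝ r x₀ v) := by
  obtain ⟨Λ, hΛ⟩ := ContinuousLinearMap.exists_comp_eq_of_ker_le (hsurj x₀ hx₀) hker
  exact ⟨Λ, fun v => by rw [← hΛ]; rfl⟩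

/-- **Lagrange multipliers for Banach spaces.**
Let `X` and `Y` be real Banach spaces, `r : X → Y` a `C¹` map and `H : X → ℝ` a `C¹`
functional. Suppose that at each zero of `r` the Fréchet derivative of `r` is surjective.
If `x₀` is a zero of `r` and the derivative of `H` at `x₀` vanishes on the kernel of the
derivative of `r` at `x₀`, then there is a continuous linear functional `Λ : Y → ℝ` with
`D H x₀ v = Λ (D r x₀ v)` for all `v`. -/
theorem lagrange_multipliers_banach
    {X Y : Type*} [NormedAddCommGroup X] [NormedSpace ℝ X] [CompleteSpace X]
    [NormedAddCommGroup Y] [NormedSpace ℝ Y] [CompleteSpace Y]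
    (r : X → Y) (H : X → ℝ)
    (hr : ContDiff ℝ 1 r) (hH : ContDiff ℝ 1 H)
    (hsurj : ∀ x : X, r x = 0 → Function.Surjective (fderiv ℝ r x))
    (x₀ : X) (hx₀ : r x₀ = 0)
    (hker : ∀ v : X, fderiv ℝ r x₀ v = 0 → fderiv ℝ H x₀ v = 0) :
    ∃ Λ : Y →L[ℝ] ℝ, ∀ v : X, fderiv ℝ H x₀ v = Λ (fderiv ℝ r x₀ v) :=
  lagrange_multipliers_banach_general r H hsurj x₀ hx₀ hker
end

section
/- Let n ≥ 3 be an integer. Then for every real number a with −1 ≤ a ≤ 1, the cubic p(a) = −(1/4)a³ + (1 − n/4)a² + 2(n − 1)a + 3(1 − n) satisfies p(a) < 0. -/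
/-!
Viewed as a function of the dimension, `p` is affine with slope `-(2 - a)(6 - a)/4`, which is
negative for `a ≤ 2`; so it suffices to treat `n = 3`. There `p(a) = a²(1 - a)/4 + 4a - 6`, and on
`[-1, 1]` the first term is at most `1/2` while `4a - 6 ≤ -2`.
-/

/-- The cubic `p` of the statement, with the dimension `n` replaced by a real parameter `ν`. -/
noncomputable def coercivityCubic (ν a : ℝ) : ℝ :=
  -(1 / 4) * a ^ 3 + (1 - ν / 4) * a ^ 2 + 2 * (ν - 1) * a + 3 * (1 - ν)

theorem coercivityCubic_sub (μ ν a : ℝ) :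
    coercivityCubic ν a - coercivityCubic μ a = -((ν - μ) / 4) * ((2 - a) * (6 - a)) := by
  unfold coercivityCubic
  ring

theorem coercivityCubic_antitone {a : ℝ} (ha : a ≤ 2) : Antitone (coercivityCubic · a) := by
  intro μ ν hμν
  have hslope : 0 ≤ (ν - μ) / 4 * ((2 - a) * (6 - a)) :=
    mul_nonneg (by linarith) (mul_nonneg (by linarith) (by linarith))
  linarith [coercivityCubic_sub μ ν a]

theorem coercivityCubic_three (a : ℝ) :
    coercivityCubic 3 a = a ^ 2 * (1 - a) / 4 + 4 * a - 6 := by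
  unfold coercivityCubic
  ring

theorem coercivityCubic_three_neg {a : ℝ} (ha : -1 ≤ a) (ha' : a ≤ 1) :
    coercivityCubic 3 a < 0 := by
  have hsq : a ^ 2 ≤ 1 := by nlinarith
  have hcube : a ^ 2 * (1 - a) ≤ 1 * 2 :=
    mul_le_mul hsq (by linarith) (by linarith) zero_le_one
  rw [coercivityCubic_three]
  linarith

/-- For `n ≥ 3` and every `a ∈ [−1, 1]`, the cubic
`p(a) = −(1/4)a³ + (1 − n/4)a² + 2(n − 1)a + 3(1 − n)` is negative. -/
theorem p_neg_on_interval (n : ℕ) (hn : 3 ≤ n) (a : ℝ) (ha : -1 ≤ a) (ha' : a ≤ 1) :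
    -(1 / 4) * a ^ 3 + (1 - (n : ℝ) / 4) * a ^ 2
        + 2 * ((n : ℝ) - 1) * a + 3 * (1 - (n : ℝ)) < 0 := by
  have hn' : (3 : ℝ) ≤ n := by exact_mod_cast hn
  calc coercivityCubic n a
      ≤ coercivityCubic 3 a := coercivityCubic_antitone (by linarith) hn'
    _ < 0 := coercivityCubic_three_neg ha ha'
end
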